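/- The n-point Gauss–Legendre quadrature rule on [−1,1] integrates exactly all polynomials of degree at most 2n−1: for any polynomial f with deg f ≤ 2n−1, ∫_{-1}^1 f(x)dx = Σ_{i=1}^n w_i f(x_i), where x_i are the roots of the Legendre polynomial ψ_n and w_i the associated weights. -/

import Mathlib

open MeasureTheory Polynomial

/-- Legendre polynomials via the three-term recurrence. -/
noncomputable def psi : ℕ → ℝ → ℝ
  | 0, _ => 1
  | 1, x => x
  | (n + 2), x =>
      ((2 * (n + 1 : ℝ) + 1) * x * psi (n + 1) x - (n + 1 : ℝ) * psi n x) / (n + 2 : ℝ)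

noncomputable def P : ℕ → Polynomial ℝ
  | 0 => 1
  | 1 => X
  | (n + 2) => C (((n : ℝ) + 2)⁻¹) *
      ((C (2 * (n : ℝ) + 3) * X) * P (n + 1) - C ((n : ℝ) + 1) * P n)

lemma P_eval : ∀ (n : ℕ) (x : ℝ), (P n).eval x = psi n x
  | 0, x => by simp [P, psi]
  | 1, x => by simp [P, psi]
  | (n + 2), x => by
      simp only [P, psi, eval_mul, eval_sub, eval_C, eval_X, P_eval (n+1), P_eval n]
      push_cast
      ring

lemma bonnet (n : ℕ) : C ((n : ℝ) + 2) * P (n + 2) =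
    (C (2 * (n : ℝ) + 3) * X) * P (n + 1) - C ((n : ℝ) + 1) * P n := by
  have h : ((n : ℝ) + 2) ≠ 0 := by positivity
  rw [P, ← mul_assoc, ← C_mul, mul_inv_cancel₀ h, C_1, one_mul]

lemma AB : ∀ n : ℕ, (derivative (P (n+1)) = X * derivative (P n) + C ((n:ℝ)+1) * P n)
    ∧ (X * derivative (P (n+1)) = derivative (P n) + C ((n:ℝ)+1) * P (n+1))
  | 0 => by constructor <;> simp [P]
  | (n+1) => by
    obtain ⟨hA, hB⟩ := AB n
    have h2 : (C ((n:ℝ)+2) : Polynomial ℝ) ≠ 0 := by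
      rw [Ne, C_eq_zero]; positivity
    have hb' := congrArg derivative (bonnet n)
    have hbo := bonnet n
    simp only [derivative_mul, derivative_sub, derivative_C, derivative_X, zero_mul, mul_one,
      zero_add, add_zero, one_mul, mul_zero] at hb'
    have hA' : derivative (P (n+2)) = X * derivative (P (n+1)) + C ((n:ℝ)+2) * P (n+1) := by
      apply mul_left_cancel₀ h2
      simp only [map_add, map_mul, map_ofNat, map_one] at hb' hB ⊢
      linear_combination hb' + ((C (n:ℝ) : Polynomial ℝ) + 1) * hB
    constructor
    · push_cast
      convert hA' using 3 <;> ring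
    · push_cast
      have goal : X * derivative (P (n+2)) = derivative (P (n+1)) + C ((n:ℝ)+2) * P (n+2) := by
        simp only [map_add, map_mul, map_ofNat, map_one] at hA' hB hA hbo ⊢
        linear_combination X*hA' + X*hB - hA - hbo
      convert goal using 3 <;> ring

lemma hD (n : ℕ) : derivative (P (n+2)) - derivative (P n) = C (2*(n:ℝ)+3) * P (n+1) := by
  obtain ⟨hA, hB⟩ := AB n
  obtain ⟨hA', _⟩ := AB (n+1)
  push_cast at hA'
  simp only [map_add, map_mul, map_ofNat, map_one] at hA hB hA' ⊢
  linear_combination hA' + hB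

lemma P_eval_one : ∀ n : ℕ, (P n).eval 1 = 1
  | 0 => by simp [P]
  | 1 => by simp [P]
  | (n+2) => by
    have h : ((n : ℝ) + 2) ≠ 0 := by positivity
    simp only [P, eval_mul, eval_sub, eval_C, eval_X, P_eval_one (n+1), P_eval_one n]
    field_simp
    ring

lemma P_eval_negone : ∀ n : ℕ, (P n).eval (-1) = (-1)^n
  | 0 => by simp [P]
  | 1 => by simp [P]
  | (n+2) => by
    have h : ((n : ℝ) + 2) ≠ 0 := by positivity
    simp only [P, eval_mul, eval_sub, eval_C, eval_X, P_eval_negone (n+1), P_eval_negone n]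
    field_simp
    ring

lemma pii (p : Polynomial ℝ) (a b : ℝ) :
    IntervalIntegrable (fun t => p.eval t) volume a b :=
  p.continuous.intervalIntegrable a b

lemma integral_derivative (p : Polynomial ℝ) (a b : ℝ) :
    ∫ t in a..b, (derivative p).eval t = p.eval b - p.eval a := by
  apply intervalIntegral.integral_deriv_eq_sub'
  · funext t; exact (p.hasDerivAt t).deriv
  · intro t _; exact (p.hasDerivAt t).differentiableAt
  · exact (derivative p).continuous.continuousOn

lemma pii2 (k : ℕ) (p : Polynomial ℝ) (a b : ℝ) :
    IntervalIntegrable (fun t => t^k * p.eval t) volume a b := by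
  have := pii (X^k * p) a b
  simpa using this

lemma orth : ∀ (k : ℕ), ∀ n, k < n → (∫ t in (-1:ℝ)..1, t^k * (P n).eval t) = 0
  | 0, n, hkn => by
    obtain ⟨m, rfl⟩ : ∃ m, n = m + 1 := ⟨n - 1, by omega⟩
    have key := integral_derivative (P (m+2) - P m) (-1) 1
    have hd : derivative (P (m+2) - P m) = C (2*(m:ℝ)+3) * P (m+1) := by
      rw [derivative_sub, hD]
    rw [hd] at key
    simp only [eval_mul, eval_C, eval_sub, P_eval_one, P_eval_negone] at key
    rw [intervalIntegral.integral_const_mul] at key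
    have h3 : (2*(m:ℝ)+3) ≠ 0 := by positivity
    have key2 : (2*(m:ℝ)+3) * (∫ t in (-1:ℝ)..1, (P (m+1)).eval t) = 0 := by
      rw [key]; ring
    rcases mul_eq_zero.mp key2 with h | h
    · exact absurd h h3
    · simpa using h
  | (j+1), n, hkn => by
    obtain ⟨m, rfl⟩ : ∃ m, n = m + 1 := ⟨n - 1, by omega⟩
    have hjm : j < m := by omega
    set G : Polynomial ℝ := X^(j+1) * (P (m+2) - P m) with hGdef
    have hG : derivative G = C ((j:ℝ)+1) * (X^j * P (m+2)) - C ((j:ℝ)+1) * (X^j * P m)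
        + C (2*(m:ℝ)+3) * (X^(j+1) * P (m+1)) := by
      have hdm := hD m
      rw [hGdef, derivative_mul, derivative_X_pow, derivative_sub]
      push_cast
      linear_combination (X:Polynomial ℝ)^(j+1) * hdm
    have hev : ∀ t : ℝ, eval t (derivative G) =
        ((j:ℝ)+1) * (t^j * eval t (P (m+2))) - ((j:ℝ)+1) * (t^j * eval t (P m))
        + (2*(m:ℝ)+3) * (t^(j+1) * eval t (P (m+1))) := by
      intro t
      rw [hG]
      simp [eval_mul, eval_pow]
    have key := integral_derivative G (-1) 1
    simp only [hev] at key
    rw [intervalIntegral.integral_add ((pii2 j _ _ _).const_mul _ |>.sub ((pii2 j _ _ _).const_mul _))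
        ((pii2 (j+1) _ _ _).const_mul _),
      intervalIntegral.integral_sub ((pii2 j _ _ _).const_mul _) ((pii2 j _ _ _).const_mul _),
      intervalIntegral.integral_const_mul, intervalIntegral.integral_const_mul,
      intervalIntegral.integral_const_mul,
      orth j (m+2) (by omega), orth j m hjm] at key
    have hevG : eval (1:ℝ) G - eval (-1:ℝ) G = 0 := by
      rw [hGdef]
      simp [eval_mul, eval_pow, P_eval_one, P_eval_negone]
      ring
    rw [hevG] at key
    have h3 : (2*(m:ℝ)+3) ≠ 0 := by positivity
    have := key.symm
    simp only [mul_zero, sub_zero, zero_add] at this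
    rcases mul_eq_zero.mp this.symm with h | h
    · exact absurd h h3
    · exact h

lemma Pdeg : ∀ n : ℕ, (P n).natDegree ≤ n ∧ 0 < (P n).coeff n
  | 0 => by simp [P]
  | 1 => by simp [P]
  | (n+2) => by
    obtain ⟨h1, c1⟩ := Pdeg (n+1)
    obtain ⟨h0, c0⟩ := Pdeg n
    constructor
    · rw [P]
      refine le_trans (natDegree_C_mul_le _ _) (le_trans (natDegree_sub_le _ _) ?_)
      refine max_le (le_trans (natDegree_mul_le) ?_) (le_trans (natDegree_C_mul_le _ _) (by omega))
      have : (C (2*(n:ℝ)+3) * X).natDegree ≤ 1 :=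
        le_trans natDegree_mul_le (by rw [natDegree_C, natDegree_X])
      omega
    · rw [P]
      rw [coeff_C_mul, coeff_sub, coeff_C_mul, mul_assoc, coeff_C_mul, coeff_X_mul]
      rw [coeff_eq_zero_of_natDegree_lt (lt_of_le_of_lt h0 (by omega))]
      have hp : (0:ℝ) < ((n:ℝ)+2)⁻¹ := by positivity
      have : (0:ℝ) < (2*(n:ℝ)+3) * (P (n+1)).coeff (n+1) := by positivity
      nlinarith

lemma PnatDeg (n : ℕ) : (P n).natDegree = n :=
  le_antisymm (Pdeg n).1 (le_natDegree_of_ne_zero (Pdeg n).2.ne')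

lemma Plead (n : ℕ) : 0 < (P n).leadingCoeff := by
  rw [leadingCoeff, PnatDeg]; exact (Pdeg n).2

lemma Pne (n : ℕ) : P n ≠ 0 := leadingCoeff_ne_zero.mp (Plead n).ne'

lemma orth_poly (n : ℕ) (q : Polynomial ℝ) (hq : q.natDegree < n) :
    (∫ t in (-1:ℝ)..1, (P n).eval t * q.eval t) = 0 := by
  have hrepr : ∀ t : ℝ, (P n).eval t * q.eval t
      = ∑ k ∈ Finset.range n, q.coeff k * (t^k * (P n).eval t) := by
    intro t
    rw [eval_eq_sum_range' hq]
    rw [Finset.mul_sum]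
    exact Finset.sum_congr rfl (fun k _ => by ring)
  simp only [hrepr]
  rw [intervalIntegral.integral_finset_sum
    (fun k _ => (pii2 k (P n) _ _).const_mul _)]
  refine Finset.sum_eq_zero (fun k hk => ?_)
  rw [intervalIntegral.integral_const_mul, orth k n (Finset.mem_range.mp hk), mul_zero]


theorem gauss_legendre_exactness (n : ℕ) (hn : 1 ≤ n)
    (x : Fin n → ℝ) (hroots : ∀ i, psi n (x i) = 0)
    (hinj : Function.Injective x) (hin : ∀ i, x i ∈ Set.Ioo (-1 : ℝ) 1)
    (w : Fin n → ℝ)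
    (hinterp : ∀ g : Polynomial ℝ, g.natDegree ≤ n - 1 →
      ∫ t in (-1 : ℝ)..1, g.eval t = ∑ i, w i * g.eval (x i)) :
    ∀ f : Polynomial ℝ, f.natDegree ≤ 2 * n - 1 →
      ∫ t in (-1 : ℝ)..1, f.eval t = ∑ i, w i * f.eval (x i) := by
  classical
  set Ψ : Polynomial ℝ := ∏ i : Fin n, (X - C (x i)) with hΨdef
  have hmonic : Ψ.Monic := monic_prod_of_monic _ _ (fun i _ => monic_X_sub_C _)
  have hdegΨ : Ψ.natDegree = n := by
    rw [hΨdef, natDegree_prod _ _ (fun i _ => X_sub_C_ne_zero _)]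
    simp
  have hProot : ∀ i, (P n).eval (x i) = 0 := fun i => by rw [P_eval]; exact hroots i
  have hΨroot : ∀ i, Ψ.eval (x i) = 0 := by
    intro i
    rw [hΨdef, eval_prod]
    exact Finset.prod_eq_zero (Finset.mem_univ i) (by simp)
  -- factorization
  have hs : (Finset.univ.val.map x) ≤ (P n).roots := by
    rw [Multiset.le_iff_subset (Multiset.Nodup.map hinj Finset.univ.nodup)]
    intro r hr
    obtain ⟨i, _, rfl⟩ := Multiset.mem_map.mp hr
    exact mem_roots'.mpr ⟨Pne n, hProot i⟩
  have hdvd : Ψ ∣ P n := by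
    have h := (Multiset.prod_X_sub_C_dvd_iff_le_roots (Pne n) (Finset.univ.val.map x)).mpr hs
    rw [Multiset.map_map] at h
    rw [hΨdef, Finset.prod_eq_multiset_prod]
    simpa [Function.comp] using h
  obtain ⟨u, hu⟩ := hdvd
  have hune : u ≠ 0 := by
    intro h; exact Pne n (by rw [hu, h, mul_zero])
  have hudeg : u.natDegree = 0 := by
    have := natDegree_mul (hmonic.ne_zero) hune
    rw [← hu, PnatDeg, hdegΨ] at this
    omega
  obtain ⟨c, rfl⟩ := natDegree_eq_zero.mp hudeg
  have hc0 : c ≠ 0 := fun h => hune (by rw [h, map_zero])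
  -- orthogonality to low degree polys
  have key : ∀ g : Polynomial ℝ, g.natDegree ≤ n - 1 →
      (∫ t in (-1:ℝ)..1, (Ψ * g).eval t) = 0 := by
    intro g hg
    have hpt : ∀ t : ℝ, (Ψ * g).eval t = c⁻¹ * ((P n).eval t * g.eval t) := by
      intro t
      rw [hu]
      simp only [eval_mul, eval_C]
      field_simp
    simp only [hpt]
    rw [intervalIntegral.integral_const_mul, orth_poly n g (by omega), mul_zero]
  intro f hf
  have hfe := modByMonic_add_div f Ψ
  have hr : (f %ₘ Ψ).natDegree ≤ n - 1 := by
    by_cases h0 : f %ₘ Ψ = 0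
    · simp [h0]
    · have hlt := degree_modByMonic_lt f hmonic
      rw [degree_eq_natDegree hmonic.ne_zero, hdegΨ] at hlt
      have := (natDegree_lt_iff_degree_lt h0).mpr hlt
      omega
  have hq : (f /ₘ Ψ).natDegree ≤ n - 1 := by
    rw [natDegree_divByMonic f hmonic, hdegΨ]
    omega
  calc (∫ t in (-1:ℝ)..1, f.eval t)
      = ∫ t in (-1:ℝ)..1, (f %ₘ Ψ + Ψ * (f /ₘ Ψ)).eval t := by rw [hfe]
    _ = (∫ t in (-1:ℝ)..1, (f %ₘ Ψ).eval t)
        + ∫ t in (-1:ℝ)..1, (Ψ * (f /ₘ Ψ)).eval t := by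
        simp only [eval_add]
        exact intervalIntegral.integral_add (pii _ _ _) (pii _ _ _)
    _ = (∑ i, w i * (f %ₘ Ψ).eval (x i)) + 0 := by rw [hinterp _ hr, key _ hq]
    _ = ∑ i, w i * f.eval (x i) := by
        rw [add_zero]
        refine Finset.sum_congr rfl (fun i _ => ?_)
        have : f.eval (x i) = (f %ₘ Ψ + Ψ * (f /ₘ Ψ)).eval (x i) := by rw [hfe]
        rw [this, eval_add, eval_mul, hΨroot i, zero_mul, add_zero]
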